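/- Let n : ℕ, G = (Fin n → ZMod 2), d = 2^n, and H the Walsh–Hadamard matrix on G. The HLB binding is associative: for all x y z : G → ℝ, B(B(x, y), z) = B(x, B(y, z)). -/

import Mathlib

/-- The Walsh–Hadamard matrix on `(Fin n → ZMod 2)`, defined by the sign character pairing. -/
noncomputable def WH (n : ℕ) : Matrix (Fin n → ZMod 2) (Fin n → ZMod 2) ℝ :=
  fun x y => (-1 : ℝ) ^ (∑ i, (x i * y i).val)

/-- The HLB binding `B(u, v) = (1/d) • H (H u ⊙ H v)`, with `⊙` pointwise product. -/
noncomputable def hB (n : ℕ) (u v : (Fin n → ZMod 2) → ℝ) : (Fin n → ZMod 2) → ℝ :=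
  ((1 : ℝ) / (2 ^ n)) • (WH n).mulVec ((WH n).mulVec u * (WH n).mulVec v)

lemma zsum (f : ZMod 2 → ℝ) : ∑ a : ZMod 2, f a = f 0 + f 1 := Fin.sum_univ_two f

lemma key (b c : ZMod 2) :
    ∑ a : ZMod 2, ((-1:ℝ)^((b*a).val) * (-1)^((a*c).val)) = if b = c then 2 else 0 := by
  rw [zsum]
  rcases (by decide : ∀ b : ZMod 2, b = 0 ∨ b = 1) b with rfl | rfl <;>
    rcases (by decide : ∀ b : ZMod 2, b = 0 ∨ b = 1) c with rfl | rfl <;> simp [ZMod.val_one] <;> norm_num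

lemma WH_sq (n : ℕ) : WH n * WH n = ((2:ℝ)^n) • 1 := by
  ext x w
  simp only [Matrix.mul_apply, WH, Matrix.smul_apply, Matrix.one_apply, smul_eq_mul]
  have h : ∀ y : Fin n → ZMod 2,
      ((-1:ℝ) ^ (∑ i, (x i * y i).val)) * ((-1:ℝ) ^ (∑ i, (y i * w i).val))
      = ∏ i, ((-1:ℝ)^((x i * y i).val) * (-1:ℝ)^((y i * w i).val)) := by
    intro y
    rw [Finset.prod_mul_distrib, Finset.prod_pow_eq_pow_sum, Finset.prod_pow_eq_pow_sum]
  calc ∑ y : Fin n → ZMod 2, ((-1:ℝ) ^ (∑ i, (x i * y i).val)) * ((-1:ℝ) ^ (∑ i, (y i * w i).val))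
      = ∑ y : Fin n → ZMod 2, ∏ i, ((-1:ℝ)^((x i * y i).val) * (-1:ℝ)^((y i * w i).val)) := by
        exact Finset.sum_congr rfl fun y _ => h y
    _ = ∏ i, ∑ a : ZMod 2, ((-1:ℝ)^((x i * a).val) * (-1:ℝ)^((a * w i).val)) := by
        rw [Finset.prod_univ_sum]
        rfl
    _ = ∏ i, (if x i = w i then (2:ℝ) else 0) := by
        exact Finset.prod_congr rfl fun i _ => key (x i) (w i)
    _ = (2:ℝ)^n * if x = w then 1 else 0 := by
        by_cases hxw : x = w
        · simp [hxw, Finset.prod_const]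
        · rw [if_neg hxw, mul_zero]
          obtain ⟨i, hi⟩ := Function.ne_iff.mp hxw
          exact Finset.prod_eq_zero (Finset.mem_univ i) (if_neg hi)

lemma WH_WH (n : ℕ) (u : (Fin n → ZMod 2) → ℝ) :
    (WH n).mulVec ((WH n).mulVec u) = ((2:ℝ)^n) • u := by
  rw [Matrix.mulVec_mulVec, WH_sq, Matrix.smul_mulVec, Matrix.one_mulVec]

lemma WH_hB (n : ℕ) (u v : (Fin n → ZMod 2) → ℝ) :
    (WH n).mulVec (hB n u v) = (WH n).mulVec u * (WH n).mulVec v := by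
  rw [hB, Matrix.mulVec_smul, WH_WH, smul_smul, one_div,
    inv_mul_cancel₀ (by positivity : ((2:ℝ)^n) ≠ 0), one_smul]

/-- The HLB binding is associative. -/
theorem stmt8 (n : ℕ) (x y z : (Fin n → ZMod 2) → ℝ) :
    hB n (hB n x y) z = hB n x (hB n y z) := by
  show ((1:ℝ)/(2^n)) • (WH n).mulVec ((WH n).mulVec (hB n x y) * (WH n).mulVec z)
      = ((1:ℝ)/(2^n)) • (WH n).mulVec ((WH n).mulVec x * (WH n).mulVec (hB n y z))
  rw [WH_hB, WH_hB, mul_assoc]
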